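/- Let λ₁, …, λ_m ∈ ℂ be distinct and nonzero, let ℓ₁, …, ℓ_m be nonnegative integers, and let k₁ ≤ k₂ be integers with k₁ ≥ 1 and k₂ − k₁ + 1 ≥ Σ_{i=1}^{m} (ℓ_i + 1). Consider the (k₂−k₁+1) × (Σ_{i=1}^{m}(ℓ_i+1)) complex matrix whose rows are indexed by k ∈ {k₁, …, k₂} and whose columns are indexed by pairs (i, j) with 1 ≤ i ≤ m and 0 ≤ j ≤ ℓ_i, with entry in row k and column (i,j) equal to k^{j} λ_i^{k}. Then this matrix has full column rank; equivalently, if complex coefficients c_{i,j} satisfy Σ_{i=1}^{m} Σ_{j=0}^{ℓ_i} c_{i,j} k^{j} λ_i^{k} = 0 for every integer k with k₁ ≤ k ≤ k₂, then all c_{i,j} = 0. -/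

import Mathlib

open Matrix Filter

/-- Euclidean norm of a vector. -/
noncomputable def eucEnorm {ι : Type*} [Fintype ι] (v : ι → ℝ) : ℝ :=
  Real.sqrt (∑ i, v i ^ 2)

/-- Largest singular value: maximum Euclidean gain over unit vectors. -/
noncomputable def sigmaMax {ι κ : Type*} [Fintype ι] [Fintype κ]
    (M : Matrix ι κ ℝ) : ℝ :=
  sSup {y | ∃ x : κ → ℝ, eucEnorm x = 1 ∧ y = eucEnorm (M.mulVec x)}

/-- Smallest gain: minimum Euclidean gain over unit vectors. -/
noncomputable def sigmaMin {ι κ : Type*} [Fintype ι] [Fintype κ]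
    (M : Matrix ι κ ℝ) : ℝ :=
  sInf {y | ∃ x : κ → ℝ, eucEnorm x = 1 ∧ y = eucEnorm (M.mulVec x)}

/-- `P` is the Moore–Penrose pseudoinverse of `A`. -/
def IsMPInv {ι κ : Type*} [Fintype ι] [Fintype κ]
    (A : Matrix ι κ ℝ) (P : Matrix κ ι ℝ) : Prop :=
  A * P * A = A ∧ P * A * P = P ∧ (A * P)ᵀ = A * P ∧ (P * A)ᵀ = P * A

/-- Block-Toeplitz matrix `T_j^{l,w}(g)`: the (a,b) block (1-indexed) is
`g (j + l - a + b - 1)`. -/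
def Tblk {q m : ℕ} (g : ℕ → Matrix (Fin q) (Fin m) ℝ) (j l w : ℕ) :
    Matrix (Fin l × Fin q) (Fin w × Fin m) ℝ :=
  Matrix.of fun a b => g (j + l + (b.1 : ℕ) - ((a.1 : ℕ) + 1)) a.2 b.2

/-- Block upper-triangular Toeplitz matrix `T_p(g)`: the (a,b) block is `g (b - a)`
for `b ≥ a` and `0` otherwise. -/
def Ttri {q m : ℕ} (g : ℕ → Matrix (Fin q) (Fin m) ℝ) (p : ℕ) :
    Matrix (Fin p × Fin q) (Fin p × Fin m) ℝ :=
  Matrix.of fun a b =>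
    if (a.1 : ℕ) ≤ (b.1 : ℕ) then g ((b.1 : ℕ) - (a.1 : ℕ)) a.2 b.2 else 0

open Polynomial

private lemma taylor1_leadingCoeff (p : ℂ[X]) :
    (taylor 1 p).leadingCoeff = p.leadingCoeff := by
  by_cases hp : p.natDegree = 0
  · obtain ⟨a, rfl⟩ := natDegree_eq_zero.mp hp
    simp [taylor_C]
  · rw [taylor_apply, leadingCoeff_comp (by rw [natDegree_X_add_C]; exact one_ne_zero),
      leadingCoeff_X_add_C, one_pow, mul_one]

private lemma taylor1_ne_zero {p : ℂ[X]} (hp : p ≠ 0) : taylor 1 p ≠ 0 := by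
  intro h
  apply hp
  rw [← leadingCoeff_eq_zero, ← taylor1_leadingCoeff, h, leadingCoeff_zero]

private lemma taylor1_degree (p : ℂ[X]) : (taylor 1 p).degree = p.degree := by
  by_cases hp : p = 0
  · simp [hp]
  · rw [degree_eq_natDegree (taylor1_ne_zero hp), degree_eq_natDegree hp, natDegree_taylor]

private lemma key {ι : Type*} (s : Finset ι) (lam : ι → ℂ)
    (hinj : Set.InjOn lam s) (hne : ∀ x ∈ s, lam x ≠ 0) (k₁ : ℤ) :
    ∀ (n : ℕ) (p : ι → Polynomial ℂ) (d : ι → ℕ),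
      (∀ x ∈ s, (p x).degree < (d x : ℕ)) →
      (∑ x ∈ s, d x) ≤ n →
      (∀ k : ℤ, k₁ ≤ k → k < k₁ + n → ∑ x ∈ s, (p x).eval (k : ℂ) * lam x ^ k = 0) →
      ∀ x ∈ s, p x = 0 := by
  intro n
  induction n with
  | zero =>
    intro p d hdeg hsum _ x hx
    have hd : d x = 0 := by
      have := Finset.sum_eq_zero_iff.mp (Nat.le_zero.mp hsum) x hx
      exact this
    have h := hdeg x hx
    rw [hd] at h
    rw [← degree_eq_bot]
    exact Nat.WithBot.lt_zero_iff.mp (by exact_mod_cast h)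
  | succ n ih =>
    intro p d hdeg hsum hz
    by_cases hall : ∀ x ∈ s, d x = 0
    · intro x hx
      have h := hdeg x hx
      rw [hall x hx] at h
      rw [← degree_eq_bot]
      exact Nat.WithBot.lt_zero_iff.mp (by exact_mod_cast h)
    · classical
      push_neg at hall
      obtain ⟨μ, hμs, hdμ⟩ := hall
      set q : ι → Polynomial ℂ := fun x =>
        C (lam x) * taylor 1 (p x) - C (lam μ) * p x with hq
      set d' : ι → ℕ := fun x => if x = μ then d μ - 1 else d x with hd'
      have hdeg' : ∀ x ∈ s, (q x).degree < (d' x : ℕ) := by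
        intro x hx
        by_cases hx0 : p x = 0
        · have hq0 : q x = 0 := by simp [hq, hx0]
          rw [hq0, degree_zero]
          exact WithBot.bot_lt_coe _
        · by_cases hxμ : x = μ
          · subst hxμ
            have hqx : q x = C (lam x) * (taylor 1 (p x) - p x) := by
              rw [hq, mul_sub]
            have h1 := degree_sub_lt (taylor1_degree (p x)) (taylor1_ne_zero hx0)
              (taylor1_leadingCoeff (p x))
            rw [taylor1_degree] at h1
            have h2 : (q x).degree < (p x).degree := by
              rw [hqx, degree_C_mul (hne x hx)]
              exact h1
            have h3 : (p x).natDegree < d x :=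
              (natDegree_lt_iff_degree_lt hx0).mpr (hdeg x hx)
            have hdx : d' x = d x - 1 := by simp [hd']
            rw [hdx]
            calc (q x).degree < (p x).degree := h2
              _ = ((p x).natDegree : WithBot ℕ) := degree_eq_natDegree hx0
              _ ≤ ((d x - 1 : ℕ) : WithBot ℕ) := by
                  exact_mod_cast Nat.le_sub_one_of_lt h3
          · have h1 : (C (lam x) * taylor 1 (p x)).degree < (d x : ℕ) := by
              rw [degree_C_mul (hne x hx), taylor1_degree]
              exact hdeg x hx
            have h2 : (C (lam μ) * p x).degree < (d x : ℕ) := by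
              rw [degree_C_mul (hne μ hμs)]
              exact hdeg x hx
            have h3 : (q x).degree < (d x : ℕ) :=
              lt_of_le_of_lt (degree_sub_le _ _) (max_lt h1 h2)
            simpa [hd', hxμ] using h3
      have hsum' : (∑ x ∈ s, d' x) ≤ n := by
        have e1 : ∑ x ∈ s, d' x = d' μ + ∑ x ∈ s.erase μ, d' x :=
          (Finset.add_sum_erase _ d' hμs).symm
        have e2 : ∑ x ∈ s, d x = d μ + ∑ x ∈ s.erase μ, d x :=
          (Finset.add_sum_erase _ d hμs).symm
        have e3 : ∑ x ∈ s.erase μ, d' x = ∑ x ∈ s.erase μ, d x := by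
          apply Finset.sum_congr rfl
          intro x hx
          simp [hd', Finset.ne_of_mem_erase hx]
        have e4 : d' μ = d μ - 1 := by simp [hd']
        omega
      have hz' : ∀ k : ℤ, k₁ ≤ k → k < k₁ + n →
          ∑ x ∈ s, (q x).eval (k : ℂ) * lam x ^ k = 0 := by
        intro k hk1 hk2
        have hA := hz (k + 1) (by omega) (by push_cast; push_cast at hk2; omega)
        have hB := hz k hk1 (by push_cast; push_cast at hk2; omega)
        push_cast at hA
        have hE : ∑ x ∈ s, (q x).eval (k : ℂ) * lam x ^ k
            = (∑ x ∈ s, (p x).eval ((k : ℂ) + 1) * lam x ^ (k + 1))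
              - lam μ * ∑ x ∈ s, (p x).eval (k : ℂ) * lam x ^ k := by
          rw [Finset.mul_sum, ← Finset.sum_sub_distrib]
          apply Finset.sum_congr rfl
          intro x hx
          have hx0 := hne x hx
          rw [hq]
          simp only [eval_sub, eval_mul, eval_C, taylor_eval]
          rw [zpow_add_one₀ hx0]
          ring
        rw [hE, hA, hB]
        ring
      have hqz : ∀ x ∈ s, q x = 0 := ih q d' hdeg' hsum' hz'
      have hpz : ∀ x ∈ s, x ≠ μ → p x = 0 := by
        intro x hx hxμ
        have h0 : C (lam x) * taylor 1 (p x) - C (lam μ) * p x = 0 := hqz x hx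
        rw [sub_eq_zero] at h0
        by_contra hp0
        have hlead := congrArg leadingCoeff h0
        rw [leadingCoeff_mul, leadingCoeff_mul, leadingCoeff_C, leadingCoeff_C,
          taylor1_leadingCoeff] at hlead
        have hl0 : (p x).leadingCoeff ≠ 0 := fun h => hp0 (leadingCoeff_eq_zero.mp h)
        exact hxμ (hinj hx hμs (mul_right_cancel₀ hl0 hlead))
      have hμtay : taylor 1 (p μ) = p μ := by
        have h0 : C (lam μ) * taylor 1 (p μ) - C (lam μ) * p μ = 0 := hqz μ hμs
        rw [← mul_sub, mul_eq_zero] at h0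
        rcases h0 with h | h
        · exact absurd (C_eq_zero.mp h) (hne μ hμs)
        · exact sub_eq_zero.mp h
      have hshift : ∀ z : ℂ, (p μ).eval (z + 1) = (p μ).eval z := by
        intro z
        conv_rhs => rw [← hμtay, taylor_eval]
      have hconstAll : ∀ t : ℕ, (p μ).eval ((k₁ : ℂ) + t) = (p μ).eval (k₁ : ℂ) := by
        intro t
        induction t with
        | zero => simp
        | succ t iht =>
          rw [show ((k₁ : ℂ) + (t + 1 : ℕ)) = ((k₁ : ℂ) + t) + 1 by push_cast; ring,
            hshift, iht]
      have hpc : p μ = C ((p μ).eval (k₁ : ℂ)) := by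
        rw [← sub_eq_zero]
        apply eq_zero_of_infinite_isRoot
        apply Set.Infinite.mono (s := Set.range (fun t : ℕ => (k₁ : ℂ) + t))
        · rintro y ⟨t, rfl⟩
          simp [IsRoot, hconstAll t]
        · exact Set.infinite_range_of_injective
            (fun a b h => Nat.cast_injective (add_left_cancel h))
      have hfin := hz k₁ le_rfl (by push_cast; omega)
      rw [Finset.sum_eq_single μ
        (fun b hb hbμ => by rw [hpz b hb hbμ]; simp)
        (fun h => absurd hμs h)] at hfin
      have hμz : p μ = 0 := by
        rw [hpc] at hfin ⊢
        rw [eval_C] at hfin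
        rcases mul_eq_zero.mp hfin with h | h
        · rw [h, map_zero]
        · exact absurd h (zpow_ne_zero _ (hne μ hμs))
      intro x hx
      by_cases hxμ : x = μ
      · rw [hxμ]; exact hμz
      · exact hpz x hx hxμ

/-- functions `k^j λ_i^k` (distinct nonzero `λ_i`, `0 ≤ j ≤ ℓ_i`) restricted
to a window `k₁ ≤ k ≤ k₂` of length at least `Σ (ℓ_i + 1)` are linearly independent: any
vanishing linear combination has all coefficients zero. -/
theorem stmt12 (m : ℕ) (lam : Fin m → ℂ) (hinj : Function.Injective lam)
    (hne : ∀ i, lam i ≠ 0) (l : Fin m → ℕ)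
    (k₁ k₂ : ℤ) (hk₁ : 1 ≤ k₁) (hk : k₁ ≤ k₂)
    (hcond : (∑ i, ((l i : ℤ) + 1)) ≤ k₂ - k₁ + 1)
    (c : Fin m → ℕ → ℂ)
    (hzero : ∀ k : ℤ, k₁ ≤ k → k ≤ k₂ →
      (∑ i, ∑ j ∈ Finset.range (l i + 1), c i j * (k : ℂ) ^ j * lam i ^ k) = 0) :
    ∀ i, ∀ j ≤ l i, c i j = 0 := by
  set p : Fin m → Polynomial ℂ :=
    fun i => ∑ j ∈ Finset.range (l i + 1), C (c i j) * X ^ j with hp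
  have hkey := key Finset.univ lam hinj.injOn (fun x _ => hne x) k₁
    (k₂ - k₁ + 1).toNat p (fun i => l i + 1)
    (by
      intro i _
      have h1 : (p i).degree ≤ (l i : ℕ) := by
        refine le_trans (degree_sum_le _ _) ?_
        apply Finset.sup_le
        intro j hj
        exact le_trans (degree_C_mul_X_pow_le _ _)
          (by exact_mod_cast Nat.lt_succ_iff.mp (Finset.mem_range.mp hj))
      exact lt_of_le_of_lt h1 (by exact_mod_cast Nat.lt_succ_self (l i)))
    (by
      have h1 : ((∑ i, (l i + 1) : ℕ) : ℤ) ≤ k₂ - k₁ + 1 := by push_cast; exact hcond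
      show (∑ i : Fin m, (l i + 1)) ≤ (k₂ - k₁ + 1).toNat
      omega)
    (by
      intro k hk1 hk2
      have hk2' : k ≤ k₂ := by omega
      have h0 := hzero k hk1 hk2'
      rw [← h0]
      apply Finset.sum_congr rfl
      intro i _
      simp only [hp, eval_finset_sum, eval_mul, eval_C, eval_pow, eval_X, Finset.sum_mul])
  intro i j hj
  have hpz := hkey i (Finset.mem_univ i)
  have hc := congrArg (fun r => Polynomial.coeff r j) hpz
  simp only [hp, finset_sum_coeff, coeff_C_mul, coeff_X_pow, coeff_zero, mul_ite, mul_one,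
    mul_zero] at hc
  rw [Finset.sum_ite_eq, if_pos (Finset.mem_range.mpr (Nat.lt_succ_iff.mpr hj))] at hc
  exact hc
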